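/- Let A be a Banach synaptic algebra (a norm-complete synaptic algebra), and for a, b ∈ A let a ∨ₛ b and a ∧ₛ b be the elements of A whose spectral resolutions are given by p_{a∨ₛb,λ} := p_{a,λ} ∧ p_{b,λ} and p_{a∧ₛb,λ} := ⋀_{λ<μ∈ℝ}(p_{a,μ} ∨ p_{b,μ}) for λ ∈ ℝ. Then a ∧ₛ b is the infimum and a ∨ₛ b is the supremum of a and b in the spectral order ≤ₛ, so that (A, ≤ₛ) is a lattice; moreover, under the spectral order, the set E = {e ∈ A : 0 ≤ e ≤ 1} of effects is a sublattice of A. -/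

import Mathlib

open Filter Topology

/-- The order-unit norm associated with an order relation `le` on a real algebra:
`‖a‖ = inf {λ > 0 : −λ ≤ a ≤ λ}`. -/
noncomputable def ouNorm {R : Type*} [Ring R] [Algebra ℝ R] (le : R → R → Prop) (a : R) : ℝ :=
  sInf {l : ℝ | 0 < l ∧ le (algebraMap ℝ R (-l)) a ∧ le a (algebraMap ℝ R l)}

/-- A synaptic algebra: a real linear subspace `A` (containing `1`) of a unital associative
algebra `R` over `ℝ` (a complex algebra is in particular a real algebra), equipped with a
partial order making it an Archimedean partially ordered real linear space with order unit `1`,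
and satisfying axioms SA1–SA8.  The square root (SA5) and the carrier (SA6) are bundled as
data together with their defining properties. -/
structure SynapticAlgebra (R : Type*) [Ring R] [Algebra ℝ R] where
  A : Submodule ℝ R
  one_mem : (1 : R) ∈ A
  /-- the synaptic order (meaningful on elements of `A`) -/
  le : R → R → Prop
  -- SA1 : Archimedean partially ordered real linear space with order unit 1
  le_refl : ∀ a ∈ A, le a a
  le_antisymm : ∀ a ∈ A, ∀ b ∈ A, le a b → le b a → a = b
  le_trans : ∀ a ∈ A, ∀ b ∈ A, ∀ c ∈ A, le a b → le b c → le a c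
  add_le_add_right : ∀ a ∈ A, ∀ b ∈ A, ∀ c ∈ A, le a b → le (a + c) (b + c)
  smul_nonneg : ∀ r : ℝ, 0 ≤ r → ∀ a ∈ A, le 0 a → le 0 (r • a)
  arch : ∀ a ∈ A, ∀ b ∈ A, (∀ n : ℕ, le ((n : ℝ) • a) b) → le a 0
  one_order_unit : ∀ a ∈ A, ∃ n : ℕ, le a ((n : ℝ) • (1 : R))
  zero_ne_one : (0 : R) ≠ 1
  -- SA2
  sq_mem : ∀ a ∈ A, a * a ∈ A
  sq_nn : ∀ a ∈ A, le 0 (a * a)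
  -- SA3
  quad_mem : ∀ a ∈ A, ∀ b ∈ A, a * b * a ∈ A
  quad_nn : ∀ a ∈ A, ∀ b ∈ A, le 0 a → le 0 b → le 0 (a * b * a)
  -- SA4
  quad_zero : ∀ a ∈ A, ∀ b ∈ A, le 0 b → a * b * a = 0 → a * b = 0 ∧ b * a = 0
  -- SA5 : square roots
  sqrt : R → R
  sqrt_mem : ∀ a ∈ A, le 0 a → sqrt a ∈ A
  sqrt_nn : ∀ a ∈ A, le 0 a → le 0 (sqrt a)
  sqrt_sq : ∀ a ∈ A, le 0 a → sqrt a * sqrt a = a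
  sqrt_bicomm : ∀ a ∈ A, le 0 a → ∀ b ∈ A, a * b = b * a → sqrt a * b = b * sqrt a
  sqrt_unique : ∀ a ∈ A, le 0 a → ∀ b ∈ A, le 0 b → b * b = a →
    (∀ c ∈ A, a * c = c * a → b * c = c * b) → b = sqrt a
  -- SA6 : carriers
  carr : R → R
  carr_mem : ∀ a ∈ A, carr a ∈ A
  carr_idem : ∀ a ∈ A, carr a * carr a = carr a
  carr_spec : ∀ a ∈ A, ∀ b ∈ A, (a * b = 0 ↔ carr a * b = 0)
  -- SA7
  inv_exists : ∀ a ∈ A, le 1 a → ∃ b ∈ A, a * b = 1 ∧ b * a = 1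
  -- SA8
  comm_closed : ∀ a ∈ A, ∀ b ∈ A, ∀ f : ℕ → R, (∀ n, f n ∈ A) →
    (∀ n, le (f n) (f (n + 1))) → (∀ m n, f m * f n = f n * f m) →
    (∀ n, f n * b = b * f n) →
    Filter.Tendsto (fun n => ouNorm le (a - f n)) Filter.atTop (nhds 0) →
    a * b = b * a

namespace SynapticAlgebra

variable {R : Type*} [Ring R] [Algebra ℝ R] (S : SynapticAlgebra R)

/-- `|a| := (a²)^{1/2}`. -/
def absval (a : R) : R := S.sqrt (a * a)

/-- The positive part `a⁺ := (|a| + a)/2`. -/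
noncomputable def pospart (a : R) : R := (2⁻¹ : ℝ) • (S.absval a + a)

/-- The spectral resolution `p_{a,λ} := 1 − ((a − λ)⁺)°`. -/
noncomputable def specProj (a : R) (l : ℝ) : R :=
  1 - S.carr (S.pospart (a - algebraMap ℝ R l))

/-- The spectral order: `a ≤ₛ b` iff `p_{b,λ} ≤ p_{a,λ}` for all real `λ`. -/
noncomputable def specLE (a b : R) : Prop :=
  ∀ l : ℝ, S.le (S.specProj b l) (S.specProj a l)

/-- Projections of the synaptic algebra. -/
def IsProj (p : R) : Prop := p ∈ S.A ∧ p * p = p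

/-- The set `E = {e ∈ A : 0 ≤ e ≤ 1}` of effects. -/
def effects : Set R := {e | e ∈ S.A ∧ S.le 0 e ∧ S.le e 1}

/-- `p` is the infimum of the set `T` in the orthomodular lattice `P` of projections. -/
def IsProjInf (p : R) (T : Set R) : Prop :=
  S.IsProj p ∧ (∀ q ∈ T, S.le p q) ∧ ∀ r, S.IsProj r → (∀ q ∈ T, S.le r q) → S.le r p

/-- `p` is the supremum of the set `T` in the orthomodular lattice `P` of projections. -/
def IsProjSup (p : R) (T : Set R) : Prop :=
  S.IsProj p ∧ (∀ q ∈ T, S.le q p) ∧ ∀ r, S.IsProj r → (∀ q ∈ T, S.le q r) → S.le p r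

/-- A Banach (norm-complete) synaptic algebra: every Cauchy sequence in `A`
(w.r.t. the order-unit norm) converges in norm to an element of `A`. -/
noncomputable def IsBanach : Prop :=
  ∀ f : ℕ → R, (∀ n, f n ∈ S.A) →
    (∀ ε : ℝ, 0 < ε → ∃ N : ℕ, ∀ m ≥ N, ∀ n ≥ N, ouNorm S.le (f m - f n) < ε) →
    ∃ a ∈ S.A, Filter.Tendsto (fun n => ouNorm S.le (a - f n)) Filter.atTop (nhds 0)

/-- The `λ`-eigenprojection `d_{a,λ} := 1 − (a − λ)°`. -/
noncomputable def eigenProj (a : R) (l : ℝ) : R := 1 - S.carr (a - algebraMap ℝ R l)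

/-- The bicommutant `CC(a)` (within `A`). -/
def Bicomm (a : R) : Set R :=
  {b | b ∈ S.A ∧ ∀ c ∈ S.A, a * c = c * a → b * c = c * b}

/-- Projections `p` and `q` are exchanged by a symmetry (`s² = 1`, `sps = q`). -/
def ExchBySymm (p q : R) : Prop := ∃ s ∈ S.A, s * s = 1 ∧ s * p * s = q

/-- The dimension equivalence on projections: a finite chain of projections, consecutive
ones exchanged by symmetries. -/
def DimEquiv (p q : R) : Prop :=
  ∃ (n : ℕ) (c : ℕ → R), c 0 = p ∧ c n = q ∧ (∀ i ≤ n, S.IsProj (c i)) ∧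
    ∀ i < n, S.ExchBySymm (c i) (c (i + 1))

/-- `A` is of finite type iff every projection is finite. -/
def FiniteType : Prop :=
  ∀ p, S.IsProj p → ∀ q, S.IsProj q → S.DimEquiv q p → S.le q p → q = p

/-- The projection lattice `P` is a complete orthomodular lattice: every set of projections
has an infimum and a supremum in `P`. -/
def ProjComplete : Prop :=
  ∀ T : Set R, (∀ p ∈ T, S.IsProj p) →
    (∃ q, S.IsProjInf q T) ∧ (∃ q, S.IsProjSup q T)

/-- A bounded resolution of identity with bound `K`. -/
def IsBoundedResId (p : ℝ → R) (K : ℝ) : Prop :=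
  0 ≤ K ∧ (∀ l, S.IsProj (p l)) ∧
  (∀ l, l < -K → p l = 0) ∧ (∀ l, K ≤ l → p l = 1) ∧
  (∀ l l', l ≤ l' → S.le (p l) (p l')) ∧
  (∀ l, S.IsProjInf (p l) {x | ∃ l' > l, x = p l'})

end SynapticAlgebra

/-- `c` is a regular involution on the subset `T` of the poset `(T, le')`. -/
def IsRegInvPoset {R : Type*} (le' : R → R → Prop) (T : Set R) (c : R → R) : Prop :=
  (∀ a ∈ T, c a ∈ T) ∧ (∀ a ∈ T, c (c a) = a) ∧
  (∀ a ∈ T, ∀ b ∈ T, le' a b → le' (c b) (c a)) ∧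
  (∀ a ∈ T, ∀ b ∈ T, le' a (c a) → le' b (c b) → le' a (c b))

/-- `(T, le', c, 0, 1)` is a Kleene poset: a bounded poset with a regular involution. -/
def IsKleene {R : Type*} [Zero R] [One R] (le' : R → R → Prop) (T : Set R) (c : R → R) : Prop :=
  IsRegInvPoset le' T c ∧ (0 : R) ∈ T ∧ (1 : R) ∈ T ∧ ∀ a ∈ T, le' 0 a ∧ le' a 1

/-- Every pair of elements of `T` has an infimum and a supremum in `(T, le')`. -/
def HasBinSupInf {R : Type*} (le' : R → R → Prop) (T : Set R) : Prop :=
  ∀ a ∈ T, ∀ b ∈ T,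
    (∃ m ∈ T, le' m a ∧ le' m b ∧ ∀ x ∈ T, le' x a → le' x b → le' x m) ∧
    (∃ j ∈ T, le' a j ∧ le' b j ∧ ∀ x ∈ T, le' a x → le' b x → le' j x)


/-! Everything rests on two properties of the spectral resolution `λ ↦ p_{x,λ}`: it is
monotone, and it is right continuous in the sense that a projection below every `p_{x,μ}`,
`μ > λ`, lies below `p_{x,λ}`.  Since `r ≤ p_{x,λ}` iff `(x - λ)⁺ r = 0`, both follow from
`0 ≤ y⁺ - (y - t)⁺ ≤ t` for `t ≥ 0`, which in turn comes from `|y + t| ≤ |y| + |t|`, proved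
by comparing squares of commuting positive elements.  Monotonicity gives `c ≤ₛ a, b ≤ₛ d`;
right continuity gives `p_{c,λ} ≥ p_{x,λ}` whenever `x ≤ₛ a, b`, using that the carrier of
`p + q` is the join `p ∨ q`.  Finally, effects are exactly the elements with `p_{x,λ} = 0`
for `λ < 0` and `p_{x,λ} = 1` for `λ > 1`, and both formulas visibly preserve this. -/

namespace SynapticAlgebra

variable {R : Type*} [Ring R] [Algebra ℝ R] (S : SynapticAlgebra R)
  {a b c d e f m p q r s v x : R}

section Order

lemma le_iff_sub_nonneg (ha : a ∈ S.A) (hb : b ∈ S.A) : S.le a b ↔ S.le 0 (b - a) := by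
  constructor
  · intro h
    simpa [sub_eq_add_neg] using S.add_le_add_right a ha b hb (-a) (S.A.neg_mem ha) h
  · intro h
    simpa using S.add_le_add_right 0 S.A.zero_mem (b - a) (S.A.sub_mem hb ha) a ha h

lemma nonpos_of_neg_nonneg (ha : a ∈ S.A) (h : S.le 0 (-a)) : S.le a 0 := by
  rwa [S.le_iff_sub_nonneg ha S.A.zero_mem, zero_sub]

lemma add_nonneg (ha : a ∈ S.A) (hb : b ∈ S.A) (h0a : S.le 0 a) (h0b : S.le 0 b) :
    S.le 0 (a + b) := by
  have hb_le : S.le b (a + b) := by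
    simpa [add_comm] using S.add_le_add_right 0 S.A.zero_mem a ha b hb h0a
  exact S.le_trans 0 S.A.zero_mem b hb (a + b) (S.A.add_mem ha hb) h0b hb_le

lemma eq_zero_and_eq_zero_of_add_eq_zero (ha : a ∈ S.A) (h0a : S.le 0 a)
    (h0b : S.le 0 b) (h : a + b = 0) : a = 0 ∧ b = 0 := by
  have hneg : -a = b := neg_eq_of_add_eq_zero_left (by rwa [add_comm] at h)
  have ha0 : a = 0 :=
    S.le_antisymm a ha 0 S.A.zero_mem (S.nonpos_of_neg_nonneg ha (hneg ▸ h0b)) h0a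
  exact ⟨ha0, by rw [← hneg, ha0, neg_zero]⟩

lemma smul_le_smul_of_nonneg {t : ℝ} (ht : 0 ≤ t) (ha : a ∈ S.A) (hb : b ∈ S.A)
    (h : S.le a b) : S.le (t • a) (t • b) := by
  rw [S.le_iff_sub_nonneg (S.A.smul_mem t ha) (S.A.smul_mem t hb), ← smul_sub]
  exact S.smul_nonneg t ht _ (S.A.sub_mem hb ha) ((S.le_iff_sub_nonneg ha hb).1 h)

lemma one_nonneg : S.le 0 (1 : R) := by
  simpa using S.sq_nn 1 S.one_mem

lemma algebraMap_mem (t : ℝ) : algebraMap ℝ R t ∈ S.A := by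
  rw [Algebra.algebraMap_eq_smul_one]
  exact S.A.smul_mem t S.one_mem

lemma algebraMap_nonneg {t : ℝ} (ht : 0 ≤ t) : S.le 0 (algebraMap ℝ R t) := by
  rw [Algebra.algebraMap_eq_smul_one]
  exact S.smul_nonneg t ht 1 S.one_mem S.one_nonneg

lemma algebraMap_le_algebraMap {s t : ℝ} (h : s ≤ t) :
    S.le (algebraMap ℝ R s) (algebraMap ℝ R t) := by
  rw [S.le_iff_sub_nonneg (S.algebraMap_mem s) (S.algebraMap_mem t), ← map_sub]
  exact S.algebraMap_nonneg (sub_nonneg.2 h)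

lemma nonpos_of_forall_le_algebraMap (hx : x ∈ S.A)
    (h : ∀ ε : ℝ, 0 < ε → S.le x (algebraMap ℝ R ε)) : S.le x 0 := by
  refine S.arch x hx 1 S.one_mem fun n => ?_
  have hn : (0 : ℝ) < (n + 1 : ℝ)⁻¹ := by positivity
  have hscaled := S.smul_le_smul_of_nonneg (Nat.cast_nonneg n) hx (S.algebraMap_mem _) (h _ hn)
  have hbound : (n : ℝ) * (n + 1 : ℝ)⁻¹ ≤ 1 := by
    rw [← div_eq_mul_inv, div_le_one (by positivity)]
    linarith
  rw [Algebra.smul_def (n : ℝ) (algebraMap ℝ R _), ← map_mul] at hscaled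
  simpa using S.le_trans _ (S.A.smul_mem _ hx) _ (S.algebraMap_mem _) _ (S.algebraMap_mem 1)
    hscaled (S.algebraMap_le_algebraMap hbound)

lemma le_algebraMap_of_forall_lt (hx : x ∈ S.A) {t : ℝ}
    (h : ∀ s : ℝ, t < s → S.le x (algebraMap ℝ R s)) : S.le x (algebraMap ℝ R t) := by
  have hxt := S.A.sub_mem hx (S.algebraMap_mem t)
  have hle : S.le (x - algebraMap ℝ R t) 0 := by
    refine S.nonpos_of_forall_le_algebraMap hxt fun ε hε => ?_
    rw [S.le_iff_sub_nonneg hxt (S.algebraMap_mem ε)]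
    have hsub := (S.le_iff_sub_nonneg hx (S.algebraMap_mem _)).1 (h (t + ε) (by linarith))
    rwa [map_add, show algebraMap ℝ R t + algebraMap ℝ R ε - x
      = algebraMap ℝ R ε - (x - algebraMap ℝ R t) by abel] at hsub
  rw [S.le_iff_sub_nonneg hx (S.algebraMap_mem t)]
  simpa using (S.le_iff_sub_nonneg hxt S.A.zero_mem).1 hle

end Order

section Products

lemma eq_zero_of_mul_self_eq_zero (ha : a ∈ S.A) (h : a * a = 0) : a = 0 := by
  simpa using (S.quad_zero a ha 1 S.one_mem S.one_nonneg (by simpa using h)).1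

lemma mul_add_mul_mem (ha : a ∈ S.A) (hb : b ∈ S.A) : a * b + b * a ∈ S.A := by
  rw [show a * b + b * a = (a + b) * (a + b) - a * a - b * b by noncomm_ring]
  exact S.A.sub_mem (S.A.sub_mem (S.sq_mem _ (S.A.add_mem ha hb)) (S.sq_mem _ ha))
    (S.sq_mem _ hb)

lemma mul_mem_of_commute (ha : a ∈ S.A) (hb : b ∈ S.A) (h : a * b = b * a) : a * b ∈ S.A := by
  have hjordan := S.mul_add_mul_mem ha hb
  rw [← h, ← two_smul ℝ] at hjordan
  simpa [smul_smul] using S.A.smul_mem (2⁻¹ : ℝ) hjordan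

lemma mul_eq_zero_symm (ha : a ∈ S.A) (hb : b ∈ S.A) (h : a * b = 0) : b * a = 0 := by
  have hmem : b * a ∈ S.A := by simpa [h] using S.mul_add_mul_mem ha hb
  refine S.eq_zero_of_mul_self_eq_zero hmem ?_
  rw [show b * a * (b * a) = b * (a * b) * a by noncomm_ring, h, mul_zero, zero_mul]

lemma mul_nonneg_of_commute (ha : a ∈ S.A) (hm : m ∈ S.A) (h0a : S.le 0 a) (h0m : S.le 0 m)
    (h : a * m = m * a) : S.le 0 (a * m) := by
  have hsqrt := S.sqrt_bicomm a ha h0a m hm h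
  have heq : a * m = S.sqrt a * m * S.sqrt a := by
    rw [mul_assoc, ← hsqrt, ← mul_assoc, S.sqrt_sq a ha h0a]
  rw [heq]
  exact S.quad_nn _ (S.sqrt_mem a ha h0a) m hm (S.sqrt_nn a ha h0a) h0m

lemma conj_le_conj (hr : r ∈ S.A) (he : e ∈ S.A) (hf : f ∈ S.A) (h0r : S.le 0 r)
    (hef : S.le e f) : S.le (r * e * r) (r * f * r) := by
  rw [S.le_iff_sub_nonneg (S.quad_mem r hr e he) (S.quad_mem r hr f hf),
    show r * f * r - r * e * r = r * (f - e) * r by noncomm_ring]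
  exact S.quad_nn r hr _ (S.A.sub_mem hf he) h0r ((S.le_iff_sub_nonneg he hf).1 hef)

end Products

section Projections

lemma isProj_zero : S.IsProj 0 := ⟨S.A.zero_mem, mul_zero 0⟩

lemma isProj_one : S.IsProj 1 := ⟨S.one_mem, mul_one 1⟩

variable {S} in
lemma IsProj.one_sub (hp : S.IsProj p) : S.IsProj (1 - p) :=
  ⟨S.A.sub_mem S.one_mem hp.1, by noncomm_ring [hp.2]⟩

variable {S} in
lemma IsProj.nonneg (hp : S.IsProj p) : S.le 0 p := hp.2 ▸ S.sq_nn p hp.1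

lemma mul_eq_zero_of_le (he : e ∈ S.A) (hf : f ∈ S.A) (h0e : S.le 0 e) (hef : S.le e f)
    (hq : S.IsProj q) (hfq : f * q = 0) : e * q = 0 := by
  have hqe := S.quad_mem q hq.1 e he
  have hle : S.le (q * e * q) 0 := by
    simpa [mul_assoc, hfq] using S.conj_le_conj hq.1 he hf hq.nonneg hef
  have hzero : q * e * q = 0 :=
    S.le_antisymm _ hqe 0 S.A.zero_mem hle (S.quad_nn q hq.1 e he hq.nonneg h0e)
  exact (S.quad_zero q hq.1 e he h0e hzero).2

lemma proj_le_iff (hp : S.IsProj p) (hq : S.IsProj q) : S.le p q ↔ p * (1 - q) = 0 := by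
  constructor
  · intro h
    exact S.mul_eq_zero_of_le hp.1 hq.1 hp.nonneg h hq.one_sub (by noncomm_ring [hq.2])
  · intro h
    have hpq : p * q = p := by linear_combination (norm := noncomm_ring) -h
    have hqp : q * p = p := by
      linear_combination (norm := noncomm_ring) -S.mul_eq_zero_symm hp.1 hq.one_sub.1 h
    have hconj : (1 - p) * q * (1 - p) = q - p := by
      rw [show (1 - p) * q * (1 - p) = q - p * q - q * p + p * q * p by noncomm_ring, hpq, hqp,
        hp.2]
      abel
    rw [S.le_iff_sub_nonneg hp.1 hq.1, ← hconj]
    exact S.quad_nn _ hp.one_sub.1 q hq.1 hp.one_sub.nonneg hq.nonneg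

variable {S} in
lemma IsProj.le_one (hp : S.IsProj p) : S.le p 1 :=
  (S.proj_le_iff hp S.isProj_one).2 (by rw [sub_self, mul_zero])

lemma conj_algebraMap_le (hr : S.IsProj r) {t : ℝ} (ht : 0 ≤ t) :
    S.le (r * algebraMap ℝ R t * r) (algebraMap ℝ R t) := by
  rw [← Algebra.commutes, mul_assoc, hr.2, ← Algebra.smul_def,
    S.le_iff_sub_nonneg (S.A.smul_mem t hr.1) (S.algebraMap_mem t),
    Algebra.algebraMap_eq_smul_one, ← smul_sub]
  exact S.smul_nonneg t ht _ hr.one_sub.1 hr.one_sub.nonneg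

lemma carr_isProj (ha : a ∈ S.A) : S.IsProj (S.carr a) := ⟨S.carr_mem a ha, S.carr_idem a ha⟩

lemma mul_one_sub_carr (ha : a ∈ S.A) : a * (1 - S.carr a) = 0 :=
  (S.carr_spec a ha _ (S.carr_isProj ha).one_sub.1).2 (by noncomm_ring [S.carr_idem a ha])

lemma mul_carr (ha : a ∈ S.A) : a * S.carr a = a := by
  have h := S.mul_one_sub_carr ha
  rw [mul_sub, mul_one, sub_eq_zero] at h
  exact h.symm

lemma carr_mul (ha : a ∈ S.A) : S.carr a * a = a := by
  have h := S.mul_eq_zero_symm ha (S.carr_isProj ha).one_sub.1 (S.mul_one_sub_carr ha)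
  rw [sub_mul, one_mul, sub_eq_zero] at h
  exact h.symm

lemma carr_zero : S.carr 0 = 0 := by
  simpa using (S.carr_spec 0 S.A.zero_mem 1 S.one_mem).1 (zero_mul 1)

lemma carr_eq_one_of_mul_eq_one (ha : a ∈ S.A) (h : b * a = 1) : S.carr a = 1 := by
  have hzero : b * (a * (1 - S.carr a)) = 0 := by rw [S.mul_one_sub_carr ha, mul_zero]
  rw [← mul_assoc, h, one_mul, sub_eq_zero] at hzero
  exact hzero.symm

lemma carr_le_iff (ha : a ∈ S.A) (hr : S.IsProj r) : S.le (S.carr a) r ↔ a * (1 - r) = 0 :=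
  (S.proj_le_iff (S.carr_isProj ha) hr).trans (S.carr_spec a ha _ hr.one_sub.1).symm

lemma le_one_sub_carr_iff (ha : a ∈ S.A) (hr : S.IsProj r) :
    S.le r (1 - S.carr a) ↔ a * r = 0 := by
  have hc := S.carr_mem a ha
  rw [S.proj_le_iff hr (S.carr_isProj ha).one_sub, sub_sub_cancel, S.carr_spec a ha r hr.1]
  exact ⟨S.mul_eq_zero_symm hr.1 hc, S.mul_eq_zero_symm hc hr.1⟩

lemma isProjSup_carr_add (hp : S.IsProj p) (hq : S.IsProj q) :
    S.IsProjSup (S.carr (p + q)) {p, q} := by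
  have hpq := S.A.add_mem hp.1 hq.1
  have hc := S.carr_isProj hpq
  refine ⟨hc, ?_, fun r hr hub => ?_⟩
  · have hle_sum : ∀ {u w : R}, S.IsProj u → S.IsProj w → S.le u (u + w) := fun hu hw => by
      rw [S.le_iff_sub_nonneg hu.1 (S.A.add_mem hu.1 hw.1), add_sub_cancel_left]
      exact hw.nonneg
    simp only [Set.mem_insert_iff, Set.mem_singleton_iff, forall_eq_or_imp, forall_eq]
    rw [S.proj_le_iff hp hc, S.proj_le_iff hq hc]
    exact ⟨S.mul_eq_zero_of_le hp.1 hpq hp.nonneg (hle_sum hp hq) hc.one_sub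
        (S.mul_one_sub_carr hpq),
      S.mul_eq_zero_of_le hq.1 hpq hq.nonneg (add_comm q p ▸ hle_sum hq hp) hc.one_sub
        (S.mul_one_sub_carr hpq)⟩
  · rw [S.carr_le_iff hpq hr, add_mul, (S.proj_le_iff hp hr).1 (hub p (by simp)),
      (S.proj_le_iff hq hr).1 (hub q (by simp)), add_zero]

end Projections

section AbsoluteValue

lemma absval_mem (ha : a ∈ S.A) : S.absval a ∈ S.A :=
  S.sqrt_mem _ (S.sq_mem a ha) (S.sq_nn a ha)

lemma absval_nonneg (ha : a ∈ S.A) : S.le 0 (S.absval a) :=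
  S.sqrt_nn _ (S.sq_mem a ha) (S.sq_nn a ha)

lemma absval_mul_self (ha : a ∈ S.A) : S.absval a * S.absval a = a * a :=
  S.sqrt_sq _ (S.sq_mem a ha) (S.sq_nn a ha)

lemma absval_commute (ha : a ∈ S.A) (hb : b ∈ S.A) (h : a * b = b * a) :
    S.absval a * b = b * S.absval a :=
  S.sqrt_bicomm _ (S.sq_mem a ha) (S.sq_nn a ha) b hb
    (by rw [mul_assoc, h, ← mul_assoc, h, mul_assoc])

lemma absval_neg : S.absval (-a) = S.absval a := by
  rw [absval, neg_mul_neg, absval]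

lemma absval_sub_nonneg (ha : a ∈ S.A) : S.le 0 (S.absval a - a) := by
  set j := S.absval a
  have hj := S.absval_mem ha
  have hu : j - a ∈ S.A := S.A.sub_mem hj ha
  have hv : j + a ∈ S.A := S.A.add_mem hj ha
  have huv : (j - a) * (j + a) = 0 := by
    rw [show (j - a) * (j + a) = j * j - a * a + (j * a - a * j) by noncomm_ring,
      S.absval_mul_self ha, S.absval_commute ha ha rfl, sub_self, sub_self, add_zero]
  -- The carrier `p` of `j - a` kills `j + a`, so compressing `2 j ≥ 0` by `p` leaves `j - a`.
  set p := S.carr (j - a)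
  have hpv : p * (j + a) = 0 := (S.carr_spec _ hu _ hv).1 huv
  have hcompress : p * ((j - a) + (j + a)) * p = j - a := by
    rw [mul_add, hpv, add_zero, S.carr_mul hu, S.mul_carr hu]
  rw [← hcompress]
  refine S.quad_nn p (S.carr_mem _ hu) _ (S.A.add_mem hu hv) (S.carr_isProj hu).nonneg ?_
  rw [show j - a + (j + a) = j + j by abel]
  exact S.add_nonneg hj hj (S.absval_nonneg ha) (S.absval_nonneg ha)

lemma absval_add_nonneg (ha : a ∈ S.A) : S.le 0 (S.absval a + a) := by
  simpa [absval_neg] using S.absval_sub_nonneg (S.A.neg_mem ha)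

lemma absval_sub_mul_self (ha : a ∈ S.A) :
    (S.absval a - a) * (S.absval a - a) = (-2 : ℝ) • ((S.absval a - a) * a) := by
  have hcomm := S.absval_commute ha ha rfl
  rw [show (S.absval a - a) * (S.absval a - a)
      = S.absval a * S.absval a - S.absval a * a - a * S.absval a + a * a by noncomm_ring,
    S.absval_mul_self ha, ← hcomm, sub_mul]
  module

/- With `w = v - s`, `m = v + s` and `z = |w| - w ≥ 0` one has `w m = v² - s² ≥ 0` and
`z² = -2 z w`, so `z (w m) z = -½ z (z m) z` is both `≥ 0` and `≤ 0`.  Unwinding the resulting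
zero products gives `z = 0`, that is `w = |w| ≥ 0`. -/
lemma le_of_mul_self_le_mul_self (hs : s ∈ S.A) (hv : v ∈ S.A) (h0s : S.le 0 s)
    (h0v : S.le 0 v) (hsv : s * v = v * s) (hsq : S.le (s * s) (v * v)) : S.le s v := by
  set w := v - s
  set m := v + s
  have hw : w ∈ S.A := S.A.sub_mem hv hs
  have hm : m ∈ S.A := S.A.add_mem hv hs
  have hwm : w * m = v * v - s * s := by
    rw [show w * m = v * v + (v * s - s * v) - s * s by simp only [w, m]; noncomm_ring, hsv,
      sub_self, add_zero]
  have hmw : m * w = w * m := by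
    rw [hwm, show m * w = v * v + (s * v - v * s) - s * s by simp only [w, m]; noncomm_ring,
      hsv, sub_self, add_zero]
  have hwmA : w * m ∈ S.A := hwm ▸ S.A.sub_mem (S.sq_mem v hv) (S.sq_mem s hs)
  have hwm0 : S.le 0 (w * m) :=
    hwm ▸ (S.le_iff_sub_nonneg (S.sq_mem s hs) (S.sq_mem v hv)).1 hsq
  set z := S.absval w - w
  have hz : z ∈ S.A := S.A.sub_mem (S.absval_mem hw) hw
  have hz0 : S.le 0 z := S.absval_sub_nonneg hw
  have hzm : z * m = m * z := by
    rw [sub_mul, mul_sub, S.absval_commute hw hm hmw.symm, hmw]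
  have hzz : z * z = (-2 : ℝ) • (z * w) := S.absval_sub_mul_self hw
  have hzmA : z * m ∈ S.A := S.mul_mem_of_commute hz hm hzm
  have hconj : z * (w * m) * z = (-2⁻¹ : ℝ) • (z * (z * m) * z) := by
    rw [show z * (z * m) * z = z * z * (z * m) by simp only [mul_assoc, ← hzm], hzz,
      smul_mul_assoc, smul_smul, show z * (w * m) * z = z * w * (z * m) by
        simp only [mul_assoc, ← hzm]]
    norm_num
  have hzwmz : z * (w * m) * z = 0 := by
    refine S.le_antisymm _ (S.quad_mem z hz _ hwmA) 0 S.A.zero_mem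
      (S.nonpos_of_neg_nonneg (S.quad_mem z hz _ hwmA) ?_) (S.quad_nn z hz _ hwmA hz0 hwm0)
    rw [hconj, ← neg_smul, neg_neg]
    exact S.smul_nonneg _ (by norm_num) _ (S.quad_mem z hz _ hzmA)
      (S.quad_nn z hz _ hzmA hz0 (S.mul_nonneg_of_commute hz hm hz0 (S.add_nonneg hv hs h0v h0s)
        hzm))
  have hzwm : z * (w * m) = 0 := (S.quad_zero z hz _ hwmA hwm0 hzwmz).1
  have hzmz : z * v * z + z * s * z = 0 := by
    rw [show z * v * z + z * s * z = z * z * m by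
        rw [mul_assoc z z, hzm, ← mul_assoc]; simp only [m]; noncomm_ring, hzz,
      smul_mul_assoc, mul_assoc, hzwm, smul_zero]
  obtain ⟨hzvz, hzsz⟩ := S.eq_zero_and_eq_zero_of_add_eq_zero (S.quad_mem z hz v hv)
    (S.quad_nn z hz v hv hz0 h0v) (S.quad_nn z hz s hs hz0 h0s) hzmz
  have hzw : z * w = 0 := by
    rw [mul_sub, (S.quad_zero z hz v hv h0v hzvz).1, (S.quad_zero z hz s hs h0s hzsz).1,
      sub_self]
  have hz_zero : z = 0 := S.eq_zero_of_mul_self_eq_zero hz (by rw [hzz, hzw, smul_zero])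
  rw [S.le_iff_sub_nonneg hs hv]
  simpa [sub_eq_zero.1 hz_zero] using S.absval_nonneg hw

lemma absval_of_nonneg (ha : a ∈ S.A) (h0 : S.le 0 a) : S.absval a = a := by
  have hj := S.absval_mem ha
  have hsq : S.le (S.absval a * S.absval a) (a * a) := by
    rw [S.absval_mul_self ha]; exact S.le_refl _ (S.sq_mem a ha)
  have hsq' : S.le (a * a) (S.absval a * S.absval a) := by
    rw [S.absval_mul_self ha]; exact S.le_refl _ (S.sq_mem a ha)
  have hcomm := S.absval_commute ha ha rfl
  exact S.le_antisymm _ hj _ ha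
    (S.le_of_mul_self_le_mul_self hj ha (S.absval_nonneg ha) h0 hcomm hsq)
    (S.le_of_mul_self_le_mul_self ha hj h0 (S.absval_nonneg ha) hcomm.symm hsq')

lemma absval_add_algebraMap_le (hx : x ∈ S.A) (t : ℝ) :
    S.le (S.absval (x + algebraMap ℝ R t)) (S.absval x + algebraMap ℝ R |t|) := by
  set y := x + algebraMap ℝ R t
  have hy : y ∈ S.A := S.A.add_mem hx (S.algebraMap_mem t)
  have hj := S.absval_mem hx
  have hjy := S.absval_mem hy
  have hv : S.absval x + algebraMap ℝ R |t| ∈ S.A := S.A.add_mem hj (S.algebraMap_mem |t|)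
  have hxy : x * y = y * x := by
    simp only [y, mul_add, add_mul, Algebra.commutes]
  have hcomm : S.absval y * (S.absval x + algebraMap ℝ R |t|)
      = (S.absval x + algebraMap ℝ R |t|) * S.absval y := by
    rw [mul_add, add_mul, ← S.absval_commute hx hjy (S.absval_commute hy hx hxy.symm).symm,
      Algebra.commutes]
  have hcross : S.le 0 (|t| • S.absval x - t • x) := by
    rcases le_or_gt 0 t with ht | ht
    · rw [abs_of_nonneg ht, ← smul_sub]
      exact S.smul_nonneg t ht _ (S.A.sub_mem hj hx) (S.absval_sub_nonneg hx)
    · rw [abs_of_neg ht, show -t • S.absval x - t • x = (-t) • (S.absval x + x) by module]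
      exact S.smul_nonneg (-t) (by linarith) _ (S.A.add_mem hj hx) (S.absval_add_nonneg hx)
  have hdiff : (S.absval x + algebraMap ℝ R |t|) * (S.absval x + algebraMap ℝ R |t|)
      - S.absval y * S.absval y = (2 : ℝ) • (|t| • S.absval x - t • x) := by
    rw [S.absval_mul_self hy]
    simp only [y, Algebra.algebraMap_eq_smul_one, mul_add, add_mul, smul_mul_assoc,
      mul_smul_comm, one_mul, mul_one, S.absval_mul_self hx]
    match_scalars <;> simp [abs_mul_abs_self] <;> ring
  refine S.le_of_mul_self_le_mul_self hjy hv (S.absval_nonneg hy)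
    (S.add_nonneg hj (S.algebraMap_mem _) (S.absval_nonneg hx) (S.algebraMap_nonneg (abs_nonneg t)))
    hcomm ?_
  rw [S.le_iff_sub_nonneg (S.sq_mem _ hjy) (S.sq_mem _ hv), hdiff]
  exact S.smul_nonneg 2 (by norm_num) _
    (S.A.sub_mem (S.A.smul_mem _ hj) (S.A.smul_mem _ hx)) hcross

end AbsoluteValue

section PositivePart

lemma pospart_mem (ha : a ∈ S.A) : S.pospart a ∈ S.A :=
  S.A.smul_mem _ (S.A.add_mem (S.absval_mem ha) ha)

lemma pospart_nonneg (ha : a ∈ S.A) : S.le 0 (S.pospart a) :=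
  S.smul_nonneg _ (by norm_num) _ (S.A.add_mem (S.absval_mem ha) ha) (S.absval_add_nonneg ha)

lemma le_pospart (ha : a ∈ S.A) : S.le a (S.pospart a) := by
  rw [S.le_iff_sub_nonneg ha (S.pospart_mem ha),
    show S.pospart a - a = (2⁻¹ : ℝ) • (S.absval a - a) by rw [pospart]; module]
  exact S.smul_nonneg _ (by norm_num) _ (S.A.sub_mem (S.absval_mem ha) ha)
    (S.absval_sub_nonneg ha)

lemma pospart_mul_pospart_sub_self (ha : a ∈ S.A) : S.pospart a * (S.pospart a - a) = 0 := by
  rw [show S.pospart a - a = (2⁻¹ : ℝ) • (S.absval a - a) by rw [pospart]; module, pospart,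
    smul_mul_smul_comm,
    show (S.absval a + a) * (S.absval a - a)
      = S.absval a * S.absval a - a * a + (a * S.absval a - S.absval a * a) by noncomm_ring,
    S.absval_mul_self ha, S.absval_commute ha ha rfl]
  simp

lemma pospart_of_nonneg (ha : a ∈ S.A) (h0 : S.le 0 a) : S.pospart a = a := by
  rw [pospart, S.absval_of_nonneg ha h0]
  module

lemma pospart_of_nonpos (ha : a ∈ S.A) (h0 : S.le a 0) : S.pospart a = 0 := by
  have h0' : S.le 0 (-a) := by simpa using (S.le_iff_sub_nonneg ha S.A.zero_mem).1 h0
  rw [pospart, ← S.absval_neg, S.absval_of_nonneg (S.A.neg_mem ha) h0']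
  module

lemma pospart_sub_algebraMap_le (ha : a ∈ S.A) {t : ℝ} (ht : 0 ≤ t) :
    S.le (S.pospart (a - algebraMap ℝ R t)) (S.pospart a) := by
  have hat := S.A.sub_mem ha (S.algebraMap_mem t)
  have habs := S.absval_add_algebraMap_le ha (-t)
  rw [map_neg, ← sub_eq_add_neg, abs_neg, abs_of_nonneg ht] at habs
  have hv := S.A.add_mem (S.absval_mem ha) (S.algebraMap_mem t)
  rw [S.le_iff_sub_nonneg (S.pospart_mem hat) (S.pospart_mem ha),
    show S.pospart a - S.pospart (a - algebraMap ℝ R t)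
      = (2⁻¹ : ℝ) • ((S.absval a + algebraMap ℝ R t)
        - S.absval (a - algebraMap ℝ R t)) by
      simp only [pospart]; module]
  exact S.smul_nonneg _ (by norm_num) _ (S.A.sub_mem hv (S.absval_mem hat))
    ((S.le_iff_sub_nonneg (S.absval_mem hat) hv).1 habs)

lemma pospart_sub_pospart_sub_algebraMap_le (ha : a ∈ S.A) {t : ℝ} (ht : 0 ≤ t) :
    S.le (S.pospart a - S.pospart (a - algebraMap ℝ R t)) (algebraMap ℝ R t) := by
  have hat := S.A.sub_mem ha (S.algebraMap_mem t)
  have habs := S.absval_add_algebraMap_le hat t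
  rw [sub_add_cancel, abs_of_nonneg ht] at habs
  have hv := S.A.add_mem (S.absval_mem hat) (S.algebraMap_mem t)
  rw [S.le_iff_sub_nonneg (S.A.sub_mem (S.pospart_mem ha) (S.pospart_mem hat))
      (S.algebraMap_mem t),
    show algebraMap ℝ R t - (S.pospart a - S.pospart (a - algebraMap ℝ R t))
      = (2⁻¹ : ℝ) • ((S.absval (a - algebraMap ℝ R t) + algebraMap ℝ R t)
        - S.absval a) by
      simp only [pospart]; module]
  exact S.smul_nonneg _ (by norm_num) _ (S.A.sub_mem hv (S.absval_mem ha))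
    ((S.le_iff_sub_nonneg (S.absval_mem ha) hv).1 habs)

end PositivePart

section SpectralResolution

lemma specProj_isProj (hx : x ∈ S.A) (l : ℝ) : S.IsProj (S.specProj x l) :=
  (S.carr_isProj (S.pospart_mem (S.A.sub_mem hx (S.algebraMap_mem l)))).one_sub

lemma le_specProj_iff (hx : x ∈ S.A) {l : ℝ} (hr : S.IsProj r) :
    S.le r (S.specProj x l) ↔ S.pospart (x - algebraMap ℝ R l) * r = 0 :=
  S.le_one_sub_carr_iff (S.pospart_mem (S.A.sub_mem hx (S.algebraMap_mem l))) hr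

lemma specProj_mono (hx : x ∈ S.A) {l μ : ℝ} (h : l ≤ μ) :
    S.le (S.specProj x l) (S.specProj x μ) := by
  have hp := S.specProj_isProj hx l
  have hl := S.A.sub_mem hx (S.algebraMap_mem l)
  have hμ := S.A.sub_mem hl (S.algebraMap_mem (μ - l))
  rw [S.le_specProj_iff hx hp,
    show x - algebraMap ℝ R μ = x - algebraMap ℝ R l - algebraMap ℝ R (μ - l) by
      rw [map_sub]; abel]
  exact S.mul_eq_zero_of_le (S.pospart_mem hμ) (S.pospart_mem hl) (S.pospart_nonneg hμ)
    (S.pospart_sub_algebraMap_le hl (sub_nonneg.2 h)) hp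
    ((S.le_specProj_iff hx hp).1 (S.le_refl _ hp.1))

-- Right continuity: `r ≤ p_{x,l+ε}` gives `r (x-l)⁺ r = r ((x-l)⁺ - (x-l-ε)⁺) r ≤ ε`.
lemma le_specProj_of_forall_lt (hx : x ∈ S.A) {l : ℝ} (hr : S.IsProj r)
    (h : ∀ μ, l < μ → S.le r (S.specProj x μ)) : S.le r (S.specProj x l) := by
  set y := x - algebraMap ℝ R l
  have hy : y ∈ S.A := S.A.sub_mem hx (S.algebraMap_mem l)
  have hf := S.pospart_mem hy
  have hrfr := S.quad_mem r hr.1 _ hf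
  rw [S.le_specProj_iff hx hr]
  have hbound : ∀ ε : ℝ, 0 < ε → S.le (r * S.pospart y * r) (algebraMap ℝ R ε) := by
    intro ε hε
    have hyε := S.A.sub_mem hy (S.algebraMap_mem ε)
    have hdiff := S.A.sub_mem hf (S.pospart_mem hyε)
    have hzero : S.pospart (y - algebraMap ℝ R ε) * r = 0 := by
      have := (S.le_specProj_iff hx hr).1 (h (l + ε) (by linarith))
      rwa [map_add, ← sub_sub] at this
    have heq : r * S.pospart y * r
        = r * (S.pospart y - S.pospart (y - algebraMap ℝ R ε)) * r := by
      rw [mul_sub, sub_mul, mul_assoc r (S.pospart (y - algebraMap ℝ R ε)) r, hzero, mul_zero,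
        sub_zero]
    rw [heq]
    exact S.le_trans _ (S.quad_mem r hr.1 _ hdiff) _ (S.quad_mem r hr.1 _ (S.algebraMap_mem ε))
      _ (S.algebraMap_mem ε)
      (S.conj_le_conj hr.1 hdiff (S.algebraMap_mem ε) hr.nonneg
        (S.pospart_sub_pospart_sub_algebraMap_le hy hε.le))
      (S.conj_algebraMap_le hr hε.le)
  have hzero : r * S.pospart y * r = 0 :=
    S.le_antisymm _ hrfr 0 S.A.zero_mem (S.nonpos_of_forall_le_algebraMap hrfr hbound)
      (S.quad_nn r hr.1 _ hf hr.nonneg (S.pospart_nonneg hy))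
  exact (S.quad_zero r hr.1 _ hf (S.pospart_nonneg hy) hzero).2

end SpectralResolution

section Effects

lemma specProj_eq_zero_of_nonneg (hx : x ∈ S.A) (h0 : S.le 0 x) {l : ℝ} (hl : l < 0) :
    S.specProj x l = 0 := by
  set y := x - algebraMap ℝ R l
  have hy : y ∈ S.A := S.A.sub_mem hx (S.algebraMap_mem l)
  have hy0 : S.le 0 y := by
    rw [show y = x + algebraMap ℝ R (-l) by rw [map_neg, ← sub_eq_add_neg]]
    exact S.add_nonneg hx (S.algebraMap_mem _) h0 (S.algebraMap_nonneg (by linarith))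
  -- `y ≥ -l > 0`, so `y` is invertible by SA7 and its carrier is `1`.
  have hone : S.le 1 ((-l)⁻¹ • y) := by
    rw [S.le_iff_sub_nonneg S.one_mem (S.A.smul_mem _ hy),
      show (-l)⁻¹ • y - 1 = (-l)⁻¹ • x by
        simp only [y]
        rw [Algebra.algebraMap_eq_smul_one, smul_sub, smul_smul,
          show (-l)⁻¹ * l = -1 by field_simp [hl.ne]]
        module]
    exact S.smul_nonneg _ (inv_nonneg.2 (by linarith)) _ hx h0
  obtain ⟨b, -, -, hb⟩ := S.inv_exists _ (S.A.smul_mem _ hy) hone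
  have hcarr : S.carr y = 1 :=
    S.carr_eq_one_of_mul_eq_one hy (b := (-l)⁻¹ • b)
      (by rwa [smul_mul_assoc, ← mul_smul_comm])
  rw [specProj, S.pospart_of_nonneg hy hy0, hcarr, sub_self]

lemma specProj_eq_one_of_le_one (hx : x ∈ S.A) (h1 : S.le x 1) {l : ℝ} (hl : 1 ≤ l) :
    S.specProj x l = 1 := by
  have hy := S.A.sub_mem hx (S.algebraMap_mem l)
  have hy0 : S.le (x - algebraMap ℝ R l) 0 := by
    refine S.nonpos_of_neg_nonneg hy ?_
    rw [show -(x - algebraMap ℝ R l) = (1 - x) + algebraMap ℝ R (l - 1) by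
      rw [map_sub, map_one]; abel]
    exact S.add_nonneg (S.A.sub_mem S.one_mem hx) (S.algebraMap_mem _)
      ((S.le_iff_sub_nonneg hx S.one_mem).1 h1) (S.algebraMap_nonneg (by linarith))
  rw [specProj, S.pospart_of_nonpos hy hy0, S.carr_zero, sub_zero]

lemma nonneg_of_forall_specProj_eq_zero (hx : x ∈ S.A)
    (h : ∀ l : ℝ, l < 0 → S.specProj x l = 0) : S.le 0 x := by
  have hshift : ∀ l : ℝ, l < 0 → S.le 0 (x - algebraMap ℝ R l) := by
    intro l hl
    have hy := S.A.sub_mem hx (S.algebraMap_mem l)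
    have hcarr : S.carr (S.pospart (x - algebraMap ℝ R l)) = 1 :=
      (sub_eq_zero.1 (h l hl)).symm
    have hneg := (S.carr_spec _ (S.pospart_mem hy) _ (S.A.sub_mem (S.pospart_mem hy) hy)).1
      (S.pospart_mul_pospart_sub_self hy)
    rw [hcarr, one_mul, sub_eq_zero] at hneg
    exact hneg ▸ S.pospart_nonneg hy
  have hnx : S.le (-x) (algebraMap ℝ R 0) := by
    refine S.le_algebraMap_of_forall_lt (S.A.neg_mem hx) fun s hs => ?_
    rw [S.le_iff_sub_nonneg (S.A.neg_mem hx) (S.algebraMap_mem s), sub_neg_eq_add,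
      add_comm, ← sub_neg_eq_add, ← map_neg]
    exact hshift (-s) (by linarith)
  rw [map_zero, S.le_iff_sub_nonneg (S.A.neg_mem hx) S.A.zero_mem, zero_sub, neg_neg] at hnx
  exact hnx

lemma le_one_of_forall_specProj_eq_one (hx : x ∈ S.A)
    (h : ∀ l : ℝ, 1 < l → S.specProj x l = 1) : S.le x 1 := by
  rw [← map_one (algebraMap ℝ R)]
  refine S.le_algebraMap_of_forall_lt hx fun s hs => ?_
  have hy := S.A.sub_mem hx (S.algebraMap_mem s)
  have hcarr : S.carr (S.pospart (x - algebraMap ℝ R s)) = 0 := sub_eq_self.1 (h s hs)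
  have hpos : S.pospart (x - algebraMap ℝ R s) = 0 := by
    simpa using (S.carr_spec _ (S.pospart_mem hy) 1 S.one_mem).2 (by rw [hcarr, zero_mul])
  have hle := S.le_pospart hy
  rw [hpos, S.le_iff_sub_nonneg hy S.A.zero_mem, zero_sub, neg_sub] at hle
  exact (S.le_iff_sub_nonneg hx (S.algebraMap_mem s)).2 hle

lemma mem_effects_iff (hx : x ∈ S.A) :
    x ∈ S.effects ↔
      (∀ l : ℝ, l < 0 → S.specProj x l = 0) ∧ ∀ l : ℝ, 1 < l → S.specProj x l = 1 :=
  ⟨fun ⟨_, h0, h1⟩ => ⟨fun _ hl => S.specProj_eq_zero_of_nonneg hx h0 hl,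
      fun _ hl => S.specProj_eq_one_of_le_one hx h1 hl.le⟩,
    fun ⟨h0, h1⟩ => ⟨hx, S.nonneg_of_forall_specProj_eq_zero hx h0,
      S.le_one_of_forall_specProj_eq_one hx h1⟩⟩

end Effects

section SpectralLattice

def IsSpecMeet (a b c : R) : Prop :=
  ∀ l : ℝ, S.IsProjInf (S.specProj c l)
    {x | ∃ μ : ℝ, l < μ ∧ S.IsProjSup x {S.specProj a μ, S.specProj b μ}}

def IsSpecJoin (a b d : R) : Prop :=
  ∀ l : ℝ, S.IsProjInf (S.specProj d l) {S.specProj a l, S.specProj b l}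

variable {S}

lemma IsSpecJoin.symm (h : S.IsSpecJoin a b d) : S.IsSpecJoin b a d := fun l => by
  rw [Set.pair_comm]
  exact h l

lemma IsSpecJoin.left_specLE (h : S.IsSpecJoin a b d) : S.specLE a d :=
  fun l => (h l).2.1 _ (Set.mem_insert _ _)

lemma IsSpecJoin.specLE_of (h : S.IsSpecJoin a b d) (hx : x ∈ S.A) (hax : S.specLE a x)
    (hbx : S.specLE b x) : S.specLE d x := fun l =>
  (h l).2.2 _ (S.specProj_isProj hx l) (by rintro _ (rfl | rfl); exacts [hax l, hbx l])

lemma IsSpecJoin.mem_effects (h : S.IsSpecJoin a b d) (hd : d ∈ S.A) (ha : a ∈ S.effects)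
    (hb : b ∈ S.effects) : d ∈ S.effects := by
  obtain ⟨ha0, ha1⟩ := (S.mem_effects_iff ha.1).1 ha
  obtain ⟨hb0, hb1⟩ := (S.mem_effects_iff hb.1).1 hb
  refine (S.mem_effects_iff hd).2 ⟨fun l hl => ?_, fun l hl => ?_⟩
  · exact S.le_antisymm _ (h l).1.1 0 S.A.zero_mem (ha0 l hl ▸ (h l).2.1 _ (Set.mem_insert _ _))
      (h l).1.nonneg
  · refine S.le_antisymm _ (h l).1.1 1 S.one_mem (h l).1.le_one ((h l).2.2 1 S.isProj_one ?_)
    rintro _ (rfl | rfl)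
    exacts [ha1 l hl ▸ S.le_refl 1 S.one_mem, hb1 l hl ▸ S.le_refl 1 S.one_mem]

lemma IsSpecMeet.symm (h : S.IsSpecMeet a b c) : S.IsSpecMeet b a c := fun l => by
  simpa only [Set.pair_comm (S.specProj a _)] using h l

lemma IsSpecMeet.specLE_left (h : S.IsSpecMeet a b c) (ha : a ∈ S.A) : S.specLE c a := fun l =>
  (h l).2.2 _ (S.specProj_isProj ha l) fun _ ⟨μ, hμ, hsup⟩ =>
    S.le_trans _ (S.specProj_isProj ha l).1 _ (S.specProj_isProj ha μ).1 _ hsup.1.1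
      (S.specProj_mono ha hμ.le) (hsup.2.1 _ (Set.mem_insert _ _))

lemma IsSpecMeet.specLE_of (h : S.IsSpecMeet a b c) (ha : a ∈ S.A) (hb : b ∈ S.A)
    (hx : x ∈ S.A) (hxa : S.specLE x a) (hxb : S.specLE x b) : S.specLE x c := fun l =>
  S.le_specProj_of_forall_lt hx (h l).1 fun μ hμ => by
    have hsup := S.isProjSup_carr_add (S.specProj_isProj ha μ) (S.specProj_isProj hb μ)
    have hxμ := S.specProj_isProj hx μ
    exact S.le_trans _ (h l).1.1 _ hsup.1.1 _ hxμ.1 ((h l).2.1 _ ⟨μ, hμ, hsup⟩)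
      (hsup.2.2 _ hxμ (by rintro _ (rfl | rfl); exacts [hxa μ, hxb μ]))

lemma IsSpecMeet.mem_effects (h : S.IsSpecMeet a b c) (hc : c ∈ S.A) (ha : a ∈ S.effects)
    (hb : b ∈ S.effects) : c ∈ S.effects := by
  obtain ⟨ha0, ha1⟩ := (S.mem_effects_iff ha.1).1 ha
  obtain ⟨hb0, -⟩ := (S.mem_effects_iff hb.1).1 hb
  refine (S.mem_effects_iff hc).2 ⟨fun l hl => ?_, fun l hl => ?_⟩
  · have hzero : S.IsProjSup 0 {S.specProj a (l / 2), S.specProj b (l / 2)} := by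
      rw [ha0 _ (by linarith), hb0 _ (by linarith)]
      simpa [S.carr_zero] using S.isProjSup_carr_add S.isProj_zero S.isProj_zero
    exact S.le_antisymm _ (h l).1.1 0 S.A.zero_mem
      ((h l).2.1 0 ⟨l / 2, by linarith, hzero⟩) (h l).1.nonneg
  · refine S.le_antisymm _ (h l).1.1 1 S.one_mem (h l).1.le_one ((h l).2.2 1 S.isProj_one ?_)
    rintro _ ⟨μ, hμ, hsup⟩
    exact ha1 μ (by linarith) ▸ hsup.2.1 _ (Set.mem_insert _ _)

end SpectralLattice

end SynapticAlgebra

theorem spectral_inf_sup_general {R : Type*} [Ring R] [Algebra ℝ R]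
    (S : SynapticAlgebra R) (a b c d : R)
    (ha : a ∈ S.A) (hb : b ∈ S.A) (hc : c ∈ S.A) (hd : d ∈ S.A)
    (hdres : ∀ l : ℝ, S.IsProjInf (S.specProj d l) {S.specProj a l, S.specProj b l})
    (hcres : ∀ l : ℝ, S.IsProjInf (S.specProj c l)
      {x | ∃ μ : ℝ, l < μ ∧ S.IsProjSup x {S.specProj a μ, S.specProj b μ}}) :
    (S.specLE c a ∧ S.specLE c b ∧
      ∀ x ∈ S.A, S.specLE x a → S.specLE x b → S.specLE x c) ∧
    (S.specLE a d ∧ S.specLE b d ∧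
      ∀ x ∈ S.A, S.specLE a x → S.specLE b x → S.specLE d x) ∧
    (a ∈ S.effects → b ∈ S.effects → c ∈ S.effects ∧ d ∈ S.effects) := by
  have hmeet : S.IsSpecMeet a b c := hcres
  have hjoin : S.IsSpecJoin a b d := hdres
  exact ⟨⟨hmeet.specLE_left ha, hmeet.symm.specLE_left hb,
      fun x hx => hmeet.specLE_of ha hb hx⟩,
    ⟨hjoin.left_specLE, hjoin.symm.left_specLE, fun x hx => hjoin.specLE_of hx⟩,
    fun hae hbe => ⟨hmeet.mem_effects hc hae hbe, hjoin.mem_effects hd hae hbe⟩⟩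

/-- In a Banach synaptic algebra, the element `d = a ∨ₛ b` whose spectral
resolution is `p_{a,λ} ∧ p_{b,λ}` is the supremum, and the element `c = a ∧ₛ b` whose
spectral resolution is `⋀_{μ>λ}(p_{a,μ} ∨ p_{b,μ})` is the infimum, of `a` and `b` in the
spectral order; hence `(A, ≤ₛ)` is a lattice, and `E` is a sublattice. -/
theorem spectral_inf_sup {R : Type*} [Ring R] [Algebra ℝ R]
    (S : SynapticAlgebra R) (hB : S.IsBanach) (a b c d : R)
    (ha : a ∈ S.A) (hb : b ∈ S.A) (hc : c ∈ S.A) (hd : d ∈ S.A)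
    (hdres : ∀ l : ℝ, S.IsProjInf (S.specProj d l) {S.specProj a l, S.specProj b l})
    (hcres : ∀ l : ℝ, S.IsProjInf (S.specProj c l)
      {x | ∃ μ : ℝ, l < μ ∧ S.IsProjSup x {S.specProj a μ, S.specProj b μ}}) :
    (S.specLE c a ∧ S.specLE c b ∧
      ∀ x ∈ S.A, S.specLE x a → S.specLE x b → S.specLE x c) ∧
    (S.specLE a d ∧ S.specLE b d ∧
      ∀ x ∈ S.A, S.specLE a x → S.specLE b x → S.specLE d x) ∧
    (a ∈ S.effects → b ∈ S.effects → c ∈ S.effects ∧ d ∈ S.effects) :=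
  spectral_inf_sup_general S a b c d ha hb hc hd hdres hcres
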